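/- Let n be a positive integer, ζ = exp(2πi/n) ∈ ℂ, and let u ∈ ℤ[X] be such that u(ζ) is a unit of ℤ[ζ], i.e. there exists v ∈ ℤ[X] with u(ζ)·v(ζ) = 1. Then there exist an integer J ≥ 0 and ε ∈ {1, −1} such that u(ζ⁻¹) = ε·ζ^J·u(ζ). Moreover, if n is prime, then there exists an integer J ≥ 0 such that u(ζ⁻¹) = ζ^J·u(ζ) (i.e. one can take ε = 1). -/

import Mathlib

open Polynomial

/-- The primitive `n`-th root of unity `exp(2πi/n)`. -/
noncomputable def zetan (n : ℕ) : ℂ := Complex.exp (2 * ↑Real.pi * Complex.I / (n : ℂ))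

section Aux

variable {K : Type*} [Field K]

private lemma aux_conj_aeval (z : ℂ) (w : ℤ[X]) :
    (starRingEnd ℂ) (aeval z w) = aeval ((starRingEnd ℂ) z) w :=
  (aeval_algHom_apply ((starRingEnd ℂ).toIntAlgHom) z w).symm

/-- Main lemma, inside an abstract cyclotomic field. -/
private lemma aux_key (n' : ℕ+) (K : Type*) [Field K] [CharZero K]
    [IsCyclotomicExtension {(n' : ℕ)} ℚ K]
    (ζK : K) (hζK : IsPrimitiveRoot ζK n') (u v : ℤ[X])
    (hα : aeval ζK u * aeval ζK v = 1)
    (habar : aeval (ζK ^ ((n' : ℕ) - 1)) u * aeval (ζK ^ ((n' : ℕ) - 1)) v = 1) :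
    (∃ (J : ℕ) (ε : ℤ), (ε = 1 ∨ (ε = -1 ∧ ¬ 2 ∣ (n' : ℕ))) ∧
      aeval (ζK ^ ((n' : ℕ) - 1)) u = (ε : K) * ζK ^ J * aeval ζK u) ∧
    ((n' : ℕ).Prime → ∃ J : ℕ,
      aeval (ζK ^ ((n' : ℕ) - 1)) u = ζK ^ J * aeval ζK u) := by
  haveI : NumberField K := IsCyclotomicExtension.numberField {(n' : ℕ)} ℚ K
  set n : ℕ := (n' : ℕ) with hndef
  have hn : 0 < n := n'.pos
  haveI : NeZero n := ⟨hn.ne'⟩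
  set O := NumberField.RingOfIntegers K with hO
  set f : O →+* K := algebraMap O K with hf
  have hfinj : Function.Injective f := NumberField.RingOfIntegers.coe_injective
  set ζO : O := hζK.toInteger with hζOdef
  have hζOK : f ζO = ζK := rfl
  set αK : K := aeval ζK u with hαKdef
  set βK : K := aeval ζK v with hβKdef
  set abarK : K := aeval (ζK ^ (n - 1)) u with habarKdef
  set bbarK : K := aeval (ζK ^ (n - 1)) v with hbbarKdef
  set αO : O := aeval ζO u with hαOdef
  set βO : O := aeval ζO v with hβOdef
  set abarO : O := aeval (ζO ^ (n - 1)) u with habarOdef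
  set bbarO : O := aeval (ζO ^ (n - 1)) v with hbbarOdef
  have hcoe : ∀ (x : O) (w : ℤ[X]), f (aeval x w) = aeval (f x) w :=
    fun x w => (aeval_algHom_apply (f.toIntAlgHom) x w).symm
  have hζOKpow : f (ζO ^ (n - 1)) = ζK ^ (n - 1) := by rw [map_pow, hζOK]
  have hαcoe : f αO = αK := by rw [hαOdef, hcoe, hζOK]
  have hβcoe : f βO = βK := by rw [hβOdef, hcoe, hζOK]
  have habarcoe : f abarO = abarK := by rw [habarOdef, hcoe, hζOKpow]
  have hbbarcoe : f bbarO = bbarK := by rw [hbbarOdef, hcoe, hζOKpow]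
  have huO : αO * βO = 1 := by
    apply hfinj
    rw [map_mul, map_one, hαcoe, hβcoe]
    exact hα
  have hubarO : abarO * bbarO = 1 := by
    apply hfinj
    rw [map_mul, map_one, habarcoe, hbbarcoe]
    exact habar
  -- units
  set A : Oˣ := Units.mkOfMulEqOne αO βO huO with hA
  set Abar : Oˣ := Units.mkOfMulEqOne abarO bbarO hubarO with hAbar
  set W : Oˣ := Abar * A⁻¹ with hW
  set wK : K := abarK * βK with hwKdef
  have hWval : f (W : O) = wK := by
    have h1 : (W : O) = abarO * βO := rfl
    rw [h1, map_mul, habarcoe, hβcoe]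
  -- W is a torsion unit
  have htor : W ∈ NumberField.Units.torsion K := by
    rw [NumberField.Units.mem_torsion]
    intro w
    rw [show ((algebraMap (NumberField.RingOfIntegers K) K)
      (W : NumberField.RingOfIntegers K) : K) = wK from hWval, hwKdef, map_mul]
    have hαβ : w αK * w βK = 1 := by rw [← map_mul, hα, map_one]
    have habarα : w abarK = w αK := by
      set ψ := w.embedding with hψ
      have h1 : ‖ψ abarK‖ = ‖ψ αK‖ := by
        have hz : IsPrimitiveRoot (ψ ζK) n := hζK.map_of_injective ψ.injective
        have habs : ‖ψ ζK‖ = 1 := hz.norm'_eq_one hn.ne'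
        have hconj : (ψ ζK) ^ (n - 1) = (starRingEnd ℂ) (ψ ζK) := by
          have hinv : (ψ ζK)⁻¹ = (starRingEnd ℂ) (ψ ζK) := by
            rw [Complex.inv_def, Complex.normSq_eq_norm_sq, habs]; simp
          rw [← hinv]
          apply eq_inv_of_mul_eq_one_left
          rw [← pow_succ, Nat.sub_add_cancel hn]
          exact hz.pow_eq_one
        have hψα : ψ αK = aeval (ψ ζK) u :=
          (aeval_algHom_apply (ψ.toIntAlgHom) ζK u).symm
        have hψabar : ψ abarK = aeval ((ψ ζK) ^ (n - 1)) u := by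
          have h2 : ψ abarK = aeval (ψ (ζK ^ (n - 1))) u :=
            (aeval_algHom_apply (ψ.toIntAlgHom) (ζK ^ (n - 1)) u).symm
          rwa [map_pow] at h2
        rw [hψα, hψabar, hconj, ← aux_conj_aeval]
        exact RCLike.norm_conj _
      rw [← NumberField.InfinitePlace.norm_embedding_eq w,
        ← NumberField.InfinitePlace.norm_embedding_eq w]
      exact h1
    rw [habarα, hαβ]
  -- wK is a root of unity in K
  have hwfin : IsOfFinOrder wK := by
    have hWfin : IsOfFinOrder W := (CommGroup.mem_torsion _).mp htor
    obtain ⟨m, hm, hWm⟩ := isOfFinOrder_iff_pow_eq_one.mp hWfin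
    refine isOfFinOrder_iff_pow_eq_one.mpr ⟨m, hm, ?_⟩
    have h0 : (W : O) ^ m = 1 := by
      rw [← Units.val_pow_eq_pow_val, hWm, Units.val_one]
    have h1 : f ((W : O) ^ m) = 1 := by rw [h0, map_one]
    rwa [map_pow, hWval] at h1
  have hβαinv : βK * αK = 1 := by rw [mul_comm]; exact hα
  have hwmulα : wK * αK = abarK := by
    rw [hwKdef, mul_assoc, hβαinv, mul_one]
  -- the key dichotomy
  have hmain : (∃ J : ℕ, wK = ζK ^ J) ∨
      ((¬ 2 ∣ n) ∧ ∃ J : ℕ, wK = -ζK ^ J) := by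
    rcases Nat.even_or_odd n with hev | hodd
    · -- n even : show wK ^ n = 1
      left
      have h2n : 2 ∣ n := hev.two_dvd
      set l : ℕ := orderOf wK with hl
      have hlprim : IsPrimitiveRoot wK l := IsPrimitiveRoot.orderOf wK
      have hlpos : 0 < l := hwfin.orderOf_pos
      have hl2n : l ∣ 2 * n := hlprim.dvd_of_isCyclotomicExtension n' hlpos.ne'
      obtain ⟨z, -, hzord⟩ := (Commute.all ζK wK).exists_orderOf_eq_lcm
      rw [← hζK.eq_orderOf, ← hl] at hzord
      set L : ℕ := Nat.lcm n l with hL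
      have hzprim : IsPrimitiveRoot z L := by
        rw [← hzord]; exact IsPrimitiveRoot.orderOf z
      have hLpos : 0 < L := Nat.pos_of_ne_zero (Nat.lcm_ne_zero hn.ne' hlpos.ne')
      have hnL : n ∣ L := Nat.dvd_lcm_left _ _
      have hL2n : L ∣ 2 * n := Nat.lcm_dvd (dvd_mul_left n 2) hl2n
      have hLcase : L = n ∨ L = 2 * n := by
        obtain ⟨t, ht⟩ := hnL
        have h2 : n * t ∣ n * 2 := by rw [← ht, mul_comm n 2]; exact hL2n
        have ht2 : t ∣ 2 := (mul_dvd_mul_iff_left hn.ne').mp h2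
        rcases (Nat.dvd_prime Nat.prime_two).mp ht2 with h | h
        · left; rw [ht, h, mul_one]
        · right; rw [ht, h, mul_comm]
      have hLn : L = n := by
        rcases hLcase with h | h
        · exact h
        · exfalso
          have hbound : L.totient ≤ n.totient := by
            have h1 : minpoly ℚ z = cyclotomic L ℚ :=
              (cyclotomic_eq_minpoly_rat hzprim hLpos).symm
            have h2 : (minpoly ℚ z).natDegree ≤ Module.finrank ℚ K :=
              minpoly.natDegree_le z
            rw [h1, natDegree_cyclotomic] at h2
            rwa [IsCyclotomicExtension.finrank K
              (cyclotomic.irreducible_rat n'.pos)] at h2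
          rw [h, Nat.totient_mul_of_prime_of_dvd Nat.prime_two h2n] at hbound
          have := Nat.totient_pos.mpr hn
          omega
      have hwn : wK ^ n = 1 := by
        have hln : l ∣ n := hLn ▸ Nat.dvd_lcm_right n l
        exact orderOf_dvd_iff_pow_eq_one.mp (hl ▸ hln)
      obtain ⟨i, -, hi⟩ := hζK.eq_pow_of_pow_eq_one hwn
      exact ⟨i, hi.symm⟩
    · -- n odd
      obtain ⟨r, -, hr⟩ := hζK.exists_pow_or_neg_mul_pow_of_isOfFinOrder hodd hwfin
      rcases hr with hr | hr
      · exact Or.inl ⟨r, hr⟩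
      · exact Or.inr ⟨fun h => (Nat.not_even_iff_odd.mpr hodd) (even_iff_two_dvd.mpr h),
          ⟨r, hr⟩⟩
  -- the lambda = ζ - 1 argument for odd primes
  have hprime_neg : ∀ (hp : n.Prime) (r : ℕ), wK = -ζK ^ r → ¬ 2 ∣ n → False := by
    intro hp r hwr hodd
    have h2n : 2 < n := by
      have h1 := hp.two_le
      rcases Nat.lt_or_ge 2 n with h | h
      · exact h
      · exfalso; exact hodd (by omega)
    set lam : O := ζO - 1 with hlam
    have hdev : ∀ (w : ℤ[X]) (x : O), (x - 1) ∣ (aeval x w - algebraMap ℤ O (w.eval 1)) := by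
      intro w x
      have h1 : aeval x w = (w.map (algebraMap ℤ O)).eval x := by
        rw [aeval_def, eval_map]
      have h2 : algebraMap ℤ O (w.eval 1) = (w.map (algebraMap ℤ O)).eval 1 := by
        rw [eval_map, eval₂_at_one]
      rw [h1, h2]
      exact sub_dvd_eval_sub x 1 _
    have hlampow : ∀ k : ℕ, lam ∣ ζO ^ k - 1 := by
      intro k
      have h1 := sub_dvd_pow_sub_pow ζO 1 k
      rwa [one_pow] at h1
    set u1O : O := algebraMap ℤ O (u.eval 1) with hu1O
    have hd1 : lam ∣ αO - u1O := hdev u ζO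
    have hd2 : lam ∣ abarO - u1O := dvd_trans (hlampow (n - 1)) (hdev u (ζO ^ (n - 1)))
    have hd3 : lam ∣ ζO ^ r - 1 := hlampow r
    have hrelO : abarO = -(ζO ^ r * αO) := by
      apply hfinj
      rw [habarcoe, map_neg, map_mul, map_pow, hζOK, hαcoe]
      rw [← hwmulα, hwr]; ring
    have hd2u : lam ∣ 2 * u1O := by
      have hwit : 2 * u1O = -((abarO - u1O) + (αO - u1O) + (ζO ^ r - 1) * αO) := by
        rw [hrelO]; ring
      rw [hwit]
      exact dvd_neg.mpr (dvd_add (dvd_add hd2 hd1) (hd3.mul_right αO))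
    have hdn : lam ∣ (n : O) := by
      obtain ⟨z, -, hz⟩ := IsPrimitiveRoot.self_sub_one_pow_dvd_order
        (k := 1) (by omega) (hζK.toInteger_isPrimitiveRoot)
      rw [pow_one] at hz
      exact Dvd.intro_left z hz.symm
    have hcop : IsCoprime (2 : ℤ) ((n : ℕ) : ℤ) :=
      Nat.isCoprime_iff_coprime.mpr
        ((Nat.Prime.coprime_iff_not_dvd Nat.prime_two).mpr hodd)
    obtain ⟨a, b, hab⟩ := hcop
    have hu1 : lam ∣ u1O := by
      have h1 : ((a * 2 + b * n : ℤ) : O) = 1 := by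
        rw [hab]; exact Int.cast_one
      have h2 : u1O = (a : O) * (2 * u1O) + (b : O) * ((n : O) * u1O) := by
        calc u1O = ((a * 2 + b * n : ℤ) : O) * u1O := by rw [h1, one_mul]
          _ = (a : O) * (2 * u1O) + (b : O) * ((n : O) * u1O) := by
            rw [Int.cast_add, Int.cast_mul, Int.cast_mul]; push_cast; ring
      rw [h2]
      exact dvd_add (hd2u.mul_left _) ((hdn.mul_right u1O).mul_left _)
    have hαdvd : lam ∣ αO := by
      have h1 : αO = u1O + (αO - u1O) := by ring
      rw [h1]; exact dvd_add hu1 hd1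
    have hlamunit : IsUnit lam :=
      isUnit_of_dvd_unit hαdvd (IsUnit.of_mul_eq_one _ huO)
    have hnorm := NumberField.isUnit_iff_norm.mp hlamunit
    rw [RingOfIntegers.coe_norm] at hnorm
    have hlamK : ((lam : O) : K) = ζK - 1 := by
      rw [NumberField.RingOfIntegers.coe_eq_algebraMap, hlam, map_sub, map_one]
      rw [show algebraMap O K ζO = ζK from rfl]
    rw [hlamK] at hnorm
    haveI : Fact (n.Prime) := ⟨hp⟩
    have hnval : Algebra.norm ℚ (ζK - 1) = ((eval 1 (cyclotomic n' ℤ) : ℤ) : ℚ) :=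
      hζK.sub_one_norm_eq_eval_cyclotomic h2n (cyclotomic.irreducible_rat n'.pos)
    have hcyc : eval 1 (cyclotomic (n' : ℕ) ℤ) = (n : ℤ) := eval_one_cyclotomic_prime
    rw [hnval, hcyc] at hnorm
    have habs1 : |((n : ℤ) : ℚ)| = ((n : ℤ) : ℚ) := abs_of_nonneg (by positivity)
    rw [habs1] at hnorm
    have hq : ((n : ℤ) : ℚ) = 1 := hnorm
    have hn1 : n = 1 := by exact_mod_cast hq
    omega
  constructor
  · rcases hmain with ⟨J, hJ⟩ | ⟨hodd, J, hJ⟩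
    · exact ⟨J, 1, Or.inl rfl, by rw [← hwmulα, hJ]; push_cast; ring⟩
    · exact ⟨J, -1, Or.inr ⟨rfl, hodd⟩, by rw [← hwmulα, hJ]; push_cast; ring⟩
  · intro hp
    rcases hmain with ⟨J, hJ⟩ | ⟨hodd, J, hJ⟩
    · exact ⟨J, by rw [← hwmulα, hJ]⟩
    · exact absurd (hprime_neg hp J hJ hodd) (by simp)

end Aux

theorem stmt3 (n : ℕ) (hn : 0 < n) (u v : Polynomial ℤ)
    (hu : Polynomial.aeval (zetan n) u * Polynomial.aeval (zetan n) v = 1) :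
    (∃ (J : ℕ) (ε : ℤ), (ε = 1 ∨ ε = -1) ∧
      Polynomial.aeval ((zetan n)⁻¹) u =
        (ε : ℂ) * (zetan n) ^ J * Polynomial.aeval (zetan n) u) ∧
    (Nat.Prime n → ∃ J : ℕ,
      Polynomial.aeval ((zetan n)⁻¹) u = (zetan n) ^ J * Polynomial.aeval (zetan n) u) := by
  have hζ : IsPrimitiveRoot (zetan n) n := Complex.isPrimitiveRoot_exp n hn.ne'
  set ζ : ℂ := zetan n with hζdef
  -- basic facts about ζ
  have habs : ‖ζ‖ = 1 := hζ.norm'_eq_one hn.ne'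
  have hinv : ζ⁻¹ = (starRingEnd ℂ) ζ := by
    rw [Complex.inv_def, Complex.normSq_eq_norm_sq, habs]; simp
  have hpow : ζ ^ (n - 1) = ζ⁻¹ := by
    apply eq_inv_of_mul_eq_one_left
    rw [← pow_succ, Nat.sub_add_cancel hn]
    exact hζ.pow_eq_one
  -- conjugate identity
  have hubar : aeval (ζ ^ (n - 1)) u * aeval (ζ ^ (n - 1)) v = 1 := by
    have h1 : (starRingEnd ℂ) (aeval ζ u * aeval ζ v) = 1 := by rw [hu, map_one]
    rw [map_mul, aux_conj_aeval, aux_conj_aeval] at h1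
    rwa [hpow, hinv]
  -- the cyclotomic field
  set n' : ℕ+ := ⟨n, hn⟩ with hn'
  set K := CyclotomicField n' ℚ with hK
  haveI : IsCyclotomicExtension {(n' : ℕ)} ℚ K := CyclotomicField.isCyclotomicExtension (n' : ℕ) ℚ
  set ζK : K := IsCyclotomicExtension.zeta n' ℚ K with hζKdef
  have hζK : IsPrimitiveRoot ζK n' := IsCyclotomicExtension.zeta_spec n' ℚ K
  -- the embedding φ : K → ℂ with φ ζK = ζ
  have hroot : (aeval ζ) (minpoly ℚ (hζK.powerBasis ℚ).gen) = 0 := by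
    rw [hζK.powerBasis_gen ℚ, ← cyclotomic_eq_minpoly_rat hζK hn,
      aeval_def, ← eval_map, map_cyclotomic]
    exact hζ.isRoot_cyclotomic hn
  set φ : K →ₐ[ℚ] ℂ := (hζK.powerBasis ℚ).lift ζ hroot with hφdef
  have hφζ : φ ζK = ζ := by
    have := (hζK.powerBasis ℚ).lift_gen ζ hroot
    rwa [hζK.powerBasis_gen ℚ] at this
  set Φ : K →ₐ[ℤ] ℂ := φ.toRingHom.toIntAlgHom with hΦdef
  have hΦζ : Φ ζK = ζ := hφζ
  have hinjΦ : Function.Injective Φ := fun a b h => φ.injective h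
  have hΦaeval : ∀ (x : K) (w : ℤ[X]), Φ (aeval x w) = aeval (Φ x) w :=
    fun x w => (aeval_algHom_apply Φ x w).symm
  -- transfer hypotheses into K
  have hαK : aeval ζK u * aeval ζK v = 1 := by
    apply hinjΦ
    rw [map_mul, hΦaeval, hΦaeval, hΦζ, map_one]
    exact hu
  have habarK : aeval (ζK ^ (n - 1)) u * aeval (ζK ^ (n - 1)) v = 1 := by
    apply hinjΦ
    rw [map_mul, hΦaeval, hΦaeval, map_pow, hΦζ, map_one]
    exact hubar
  -- apply the main lemma
  obtain ⟨⟨J, ε, hεor, hKeq⟩, hKprime⟩ := aux_key n' K ζK hζK u v hαK habarK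
  have hcast : ((n' : ℕ)) = n := rfl
  replace hKeq : aeval (ζK ^ (n - 1)) u = (ε : K) * ζK ^ J * aeval ζK u := hKeq
  replace hKprime : n.Prime → ∃ J : ℕ, aeval (ζK ^ (n - 1)) u = ζK ^ J * aeval ζK u := hKprime
  have htransfer : ∀ (c : K), aeval (ζK ^ (n - 1)) u = c * aeval ζK u →
      aeval (ζ⁻¹) u = Φ c * aeval ζ u := by
    intro c hc
    rw [← hpow, show (ζ ^ (n-1) : ℂ) = Φ (ζK ^ (n - 1)) by rw [map_pow, hΦζ],
      ← hΦaeval, hc, map_mul, hΦaeval, hΦζ]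
  constructor
  · refine ⟨J, ε, ?_, ?_⟩
    · rcases hεor with h | ⟨h, -⟩
      · exact Or.inl h
      · exact Or.inr h
    · have := htransfer ((ε : K) * ζK ^ J) hKeq
      rw [map_mul, map_intCast, map_pow, hΦζ] at this
      exact this
  · intro hp
    obtain ⟨J', hJ'⟩ := hKprime hp
    have := htransfer (ζK ^ J') hJ'
    rw [map_pow, hΦζ] at this
    exact ⟨J', this⟩
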